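/- Let d > 0 and let x₁, …, x_N ∈ ℝ³ satisfy ‖x_i − x_j‖ ≥ 2d for all i ≠ j. Then for every c = (c₁, …, c_N) ∈ ℝᴺ, Σ_{i ≠ j} c_i c_j/(4π‖x_i − x_j‖) ≥ −(3/(2πd)) Σ_{i=1}^N c_i². -/

import Mathlib

open Real Finset MeasureTheory Set Metric Matrix
open scoped InnerProductSpace Nat

/-!
The Newtonian kernel is a superposition of Gaussians, `1 / (4π r) = (2π√π)⁻¹ ∫₀^∞ e^{-r²t²} dt`,
so the interaction energy equals `(2π√π)⁻¹ ∫₀^∞ G t dt` with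
`G t = Σ_{i ≠ j} c_i c_j e^{-‖x_i - x_j‖² t²}`. Two lower bounds on `G t` are combined.
Gaussian kernels are positive semidefinite (Schur product theorem on the power series of
`exp ⟪x_i, x_j⟫`), so `G t` is at least minus its missing diagonal, `-Σ c_i²`; this is used for
`t ≤ 2 / d`. For large `t`, comparing each row sum `Σ_{j ≠ i} e^{-‖x_i - x_j‖² t²}` with the
integral of a Gaussian over the disjoint balls `B(x_j, d)` bounds it by `O(d⁻³ t⁻³)`, hence
`G t ≥ -O(d⁻³ t⁻³) Σ c_i²`. Integrating leaves the constant
`(2 + 81√π / 256) / (2π√π) ≤ 3 / (2π)`.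
-/

section GaussianKernel

variable {ι E : Type*} [Fintype ι] [NormedAddCommGroup E] [InnerProductSpace ℝ E]

theorem posSemidef_inner_pow (v : ι → E) (n : ℕ) :
    (Matrix.of fun i j => ⟪v i, v j⟫_ℝ ^ n).PosSemidef := by
  induction n with
  | zero => simpa [vecMulVec] using posSemidef_vecMulVec_self_star (1 : ι → ℝ)
  | succ n ih =>
    have h : (of fun i j => ⟪v i, v j⟫_ℝ ^ (n + 1)) =
        (of fun i j => ⟪v i, v j⟫_ℝ ^ n) ⊙ gram ℝ v := by
      ext i j
      simp [pow_succ, gram_apply]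
    rw [h]
    exact ih.hadamard (posSemidef_gram ℝ v)

theorem sum_mul_mul_inner_pow_nonneg (v : ι → E) (c : ι → ℝ) (n : ℕ) :
    0 ≤ ∑ i, ∑ j, c i * c j * ⟪v i, v j⟫_ℝ ^ n := by
  have h := (posSemidef_inner_pow v n).dotProduct_mulVec_nonneg c
  simp only [star_trivial, dotProduct, mulVec, of_apply, mul_sum] at h
  exact h.trans_eq (sum_congr rfl fun i _ => sum_congr rfl fun j _ => by ring)

theorem sum_mul_mul_exp_inner_nonneg (v : ι → E) (c : ι → ℝ) {a : ℝ} (ha : 0 ≤ a) :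
    0 ≤ ∑ i, ∑ j, c i * c j * rexp (a * ⟪v i, v j⟫_ℝ) := by
  have hterm : ∀ i j, HasSum (fun n : ℕ => a ^ n / n ! * (c i * c j * ⟪v i, v j⟫_ℝ ^ n))
      (c i * c j * rexp (a * ⟪v i, v j⟫_ℝ)) := fun i j => by
    rw [exp_eq_exp_ℝ]
    refine ((NormedSpace.expSeries_div_hasSum_exp (a * ⟪v i, v j⟫_ℝ)).mul_left
      (c i * c j)).congr_fun fun n => ?_
    rw [mul_pow]
    ring
  refine (hasSum_sum fun i _ => hasSum_sum fun j _ => hterm i j).nonneg fun n => ?_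
  simp_rw [← mul_sum]
  exact mul_nonneg (by positivity) (sum_mul_mul_inner_pow_nonneg v c n)

theorem sum_mul_mul_exp_neg_mul_norm_sub_sq_nonneg (v : ι → E) (c : ι → ℝ) {s : ℝ}
    (hs : 0 ≤ s) : 0 ≤ ∑ i, ∑ j, c i * c j * rexp (-s * ‖v i - v j‖ ^ 2) := by
  convert sum_mul_mul_exp_inner_nonneg v (fun i => c i * rexp (-s * ‖v i‖ ^ 2))
    (by positivity : 0 ≤ 2 * s) using 3 with i _ j _
  rw [norm_sub_sq_real, show -s * (‖v i‖ ^ 2 - 2 * ⟪v i, v j⟫_ℝ + ‖v j‖ ^ 2) =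
    -s * ‖v i‖ ^ 2 + -s * ‖v j‖ ^ 2 + 2 * s * ⟪v i, v j⟫_ℝ by ring, exp_add, exp_add]
  ring

end GaussianKernel

section PairSums

variable {ι : Type*} [Fintype ι] [DecidableEq ι]

theorem sum_sum_erase_comm {M : Type*} [AddCommMonoid M] (f : ι → ι → M) :
    ∑ i, ∑ j ∈ univ.erase i, f i j = ∑ j, ∑ i ∈ univ.erase j, f i j :=
  Finset.sum_comm' fun i j => by simp [ne_comm]

theorem neg_mul_sum_sq_le_sum_erase_mul_mul {w : ι → ι → ℝ} (hw : ∀ i j, w i j = w j i)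
    (hw0 : ∀ i j, 0 ≤ w i j) {S : ℝ} (hS : ∀ i, ∑ j ∈ univ.erase i, w i j ≤ S) (c : ι → ℝ) :
    -(S * ∑ i, c i ^ 2) ≤ ∑ i, ∑ j ∈ univ.erase i, c i * c j * w i j := by
  have hrow : ∑ i, ∑ j ∈ univ.erase i, c i ^ 2 * w i j ≤ S * ∑ i, c i ^ 2 := by
    rw [mul_sum]
    refine sum_le_sum fun i _ => ?_
    rw [← mul_sum, mul_comm S]
    exact mul_le_mul_of_nonneg_left (hS i) (sq_nonneg _)
  have hcol : ∑ i, ∑ j ∈ univ.erase i, c j ^ 2 * w i j =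
      ∑ i, ∑ j ∈ univ.erase i, c i ^ 2 * w i j := by
    rw [sum_sum_erase_comm]
    simp_rw [hw]
  have hpair : ∀ i j, -((c i ^ 2 * w i j + c j ^ 2 * w i j) / 2) ≤ c i * c j * w i j :=
    fun i j => by nlinarith [mul_nonneg (sq_nonneg (c i + c j)) (hw0 i j)]
  calc -(S * ∑ i, c i ^ 2)
      ≤ -((∑ i, ∑ j ∈ univ.erase i, c i ^ 2 * w i j
          + ∑ i, ∑ j ∈ univ.erase i, c j ^ 2 * w i j) / 2) := by linarith
    _ = ∑ i, ∑ j ∈ univ.erase i, -((c i ^ 2 * w i j + c j ^ 2 * w i j) / 2) := by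
      simp only [← sum_add_distrib, sum_div, sum_neg_distrib]
    _ ≤ _ := sum_le_sum fun i _ => sum_le_sum fun j _ => hpair i j

variable {E : Type*} [NormedAddCommGroup E]

noncomputable def gaussianInteraction (x : ι → E) (c : ι → ℝ) (t : ℝ) : ℝ :=
  ∑ i, ∑ j ∈ univ.erase i, c i * c j * rexp (-‖x i - x j‖ ^ 2 * t ^ 2)

theorem neg_sum_sq_le_gaussianInteraction [InnerProductSpace ℝ E] (x : ι → E) (c : ι → ℝ)
    (t : ℝ) : -∑ i, c i ^ 2 ≤ gaussianInteraction x c t := by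
  have hpsd := sum_mul_mul_exp_neg_mul_norm_sub_sq_nonneg x c (sq_nonneg t)
  have hdiag : ∀ i, ∑ j, c i * c j * rexp (-t ^ 2 * ‖x i - x j‖ ^ 2) =
      c i ^ 2 + ∑ j ∈ univ.erase i, c i * c j * rexp (-‖x i - x j‖ ^ 2 * t ^ 2) := fun i => by
    rw [← add_sum_erase _ _ (mem_univ i), sub_self, norm_zero]
    simp only [sq, mul_zero, exp_zero, mul_one, neg_mul, mul_comm (t * t)]
  simp only [hdiag, sum_add_distrib] at hpsd
  rw [gaussianInteraction]
  linarith

theorem neg_mul_sum_sq_le_gaussianInteraction {x : ι → E} {t S : ℝ}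
    (hS : ∀ i, ∑ j ∈ univ.erase i, rexp (-‖x i - x j‖ ^ 2 * t ^ 2) ≤ S) (c : ι → ℝ) :
    -(S * ∑ i, c i ^ 2) ≤ gaussianInteraction x c t :=
  neg_mul_sum_sq_le_sum_erase_mul_mul (fun i j => by rw [norm_sub_rev])
    (fun _ _ => (exp_pos _).le) hS c

end PairSums

section Packing

variable {ι V : Type*} [Fintype ι] [DecidableEq ι] [NormedAddCommGroup V] [InnerProductSpace ℝ V]
  [FiniteDimensional ℝ V] [MeasurableSpace V] [BorelSpace V]

theorem integrable_exp_neg_mul_sq_norm_sub {b : ℝ} (hb : 0 < b) (p : V) :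
    Integrable fun z : V => rexp (-b * ‖z - p‖ ^ 2) := by
  refine Integrable.comp_sub_right (f := fun z : V => rexp (-b * ‖z‖ ^ 2)) ?_ p
  refine Integrable.of_integral_ne_zero ?_
  rw [GaussianFourier.integral_rexp_neg_mul_sq_norm hb]
  positivity

/-- On each of the disjoint balls `B(x_j, d)`, the wider Gaussian `e^{-(4/9) t² ‖z - x_i‖²}` is at
least `e^{-t² ‖x_i - x_j‖²}`, because `‖z - x_i‖ ≤ 3/2 ‖x_i - x_j‖` there. -/
theorem measureReal_ball_mul_sum_exp_le {x : ι → V} {d : ℝ}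
    (hsep : ∀ i j, i ≠ j → 2 * d ≤ ‖x i - x j‖) (i : ι) {t : ℝ} (ht : t ≠ 0) :
    volume.real (ball (0 : V) d) * ∑ j ∈ univ.erase i, rexp (-‖x i - x j‖ ^ 2 * t ^ 2) ≤
      (9 * π / (4 * t ^ 2)) ^ (Module.finrank ℝ V / 2 : ℝ) := by
  set b : ℝ := 4 / 9 * t ^ 2
  have hb : 0 < b := by positivity
  set g : V → ℝ := fun z => rexp (-b * ‖z - x i‖ ^ 2)
  have hg : Integrable g := integrable_exp_neg_mul_sq_norm_sub hb (x i)
  have hle_g : ∀ j ∈ univ.erase i, ∀ z ∈ ball (x j) d,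
      rexp (-‖x i - x j‖ ^ 2 * t ^ 2) ≤ g z := by
    intro j hj z hz
    have hsepij := hsep i j (ne_of_mem_erase hj).symm
    have hzj : ‖z - x j‖ < d := mem_ball_iff_norm.mp hz
    have hzi : ‖z - x i‖ ≤ 3 / 2 * ‖x i - x j‖ := by
      linarith [norm_sub_le_norm_sub_add_norm_sub z (x j) (x i), norm_sub_rev (x j) (x i)]
    have hzi_sq : ‖z - x i‖ ^ 2 ≤ 9 / 4 * ‖x i - x j‖ ^ 2 := by
      nlinarith [norm_nonneg (z - x i)]
    have hexp : b * ‖z - x i‖ ^ 2 ≤ ‖x i - x j‖ ^ 2 * t ^ 2 := by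
      simp only [b]; nlinarith [sq_nonneg t]
    exact exp_le_exp.mpr (by linarith)
  have hdisj : (univ.erase i : Set ι).Pairwise
      (Function.onFun Disjoint fun j => ball (x j) d) :=
    fun j _ k _ hjk => ball_disjoint_ball <| by rw [dist_eq_norm]; linarith [hsep j k hjk]
  calc volume.real (ball (0 : V) d) * ∑ j ∈ univ.erase i, rexp (-‖x i - x j‖ ^ 2 * t ^ 2)
      = ∑ j ∈ univ.erase i, volume.real (ball (x j) d) • rexp (-‖x i - x j‖ ^ 2 * t ^ 2) := by
        simp only [mul_sum, smul_eq_mul, Measure.addHaar_real_ball_center]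
    _ ≤ ∑ j ∈ univ.erase i, ∫ z in ball (x j) d, g z :=
        sum_le_sum fun j hj => setIntegral_ge_of_const_le measurableSet_ball
          measure_ball_lt_top.ne (hle_g j hj) hg.integrableOn
    _ = ∫ z in ⋃ j ∈ univ.erase i, ball (x j) d, g z :=
        (integral_biUnion_finset _ (fun _ _ => measurableSet_ball) hdisj
          fun _ _ => hg.integrableOn).symm
    _ ≤ ∫ z, g z := setIntegral_le_integral hg (.of_forall fun _ => (exp_pos _).le)
    _ = (9 * π / (4 * t ^ 2)) ^ (Module.finrank ℝ V / 2 : ℝ) := by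
        rw [integral_sub_right_eq_self (fun z => rexp (-b * ‖z‖ ^ 2)),
          GaussianFourier.integral_rexp_neg_mul_sq_norm hb]
        congr 1
        field_simp
        ring

end Packing

theorem sum_exp_le_of_separated_fin_three {ι : Type*} [Fintype ι] [DecidableEq ι]
    {x : ι → EuclideanSpace ℝ (Fin 3)} {d : ℝ} (hd : 0 < d)
    (hsep : ∀ i j, i ≠ j → 2 * d ≤ ‖x i - x j‖) (i : ι) {t : ℝ} (ht : 0 < t) :
    ∑ j ∈ univ.erase i, rexp (-‖x i - x j‖ ^ 2 * t ^ 2) ≤ 81 * √π / (32 * d ^ 3) / t ^ 3 := by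
  have hpack := measureReal_ball_mul_sum_exp_le hsep i ht.ne'
  have hvol : volume.real (ball (0 : EuclideanSpace ℝ (Fin 3)) d) = 4 / 3 * π * d ^ 3 := by
    rw [measureReal_def, EuclideanSpace.volume_ball_fin_three, ENNReal.toReal_mul,
      ENNReal.toReal_pow, ENNReal.toReal_ofReal hd.le, ENNReal.toReal_ofReal (by positivity)]
    ring
  have hgauss : (9 * π / (4 * t ^ 2)) ^ (3 / 2 : ℝ) = 27 * π * √π / (8 * t ^ 3) := by
    rw [show (3 / 2 : ℝ) = 1 + 1 / 2 by norm_num, rpow_add (by positivity), rpow_one,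
      ← sqrt_eq_rpow, sqrt_div' _ (by positivity), sqrt_mul' _ pi_pos.le,
      sqrt_mul' _ (sq_nonneg t), sqrt_sq ht.le]
    field_simp
    ring
  rw [finrank_euclideanSpace_fin, hvol, Nat.cast_ofNat, hgauss] at hpack
  rw [← le_div_iff₀' (by positivity)] at hpack
  refine hpack.trans_eq ?_
  field_simp
  ring

theorem integral_Ioi_exp_neg_sq_mul_sq {r : ℝ} (hr : 0 < r) :
    ∫ t in Ioi 0, rexp (-r ^ 2 * t ^ 2) = √π / (2 * r) := by
  rw [integral_gaussian_Ioi, sqrt_div' _ (sq_nonneg r), sqrt_sq hr.le, div_div, mul_comm]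

theorem neg_add_le_integral_Ioi {F : ℝ → ℝ} (hF : IntegrableOn F (Ioi 0)) {A B T : ℝ}
    (hT : 0 < T) (hA : ∀ t, 0 < t → -A ≤ F t) (hB : ∀ t, 0 < t → -B / t ^ 3 ≤ F t) :
    -(A * T + B / (2 * T ^ 2)) ≤ ∫ t in Ioi 0, F t := by
  have hnear : -(A * T) ≤ ∫ t in Ioc 0 T, F t :=
    calc -(A * T) = ∫ _ in Ioc 0 T, -A := by
          rw [setIntegral_const, volume_real_Ioc_of_le hT.le, smul_eq_mul]; ring
      _ ≤ ∫ t in Ioc 0 T, F t := setIntegral_mono_on (integrableOn_const (by simp))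
          (hF.mono_set Ioc_subset_Ioi_self) measurableSet_Ioc fun t ht => hA t ht.1
  have hfar : -(B / (2 * T ^ 2)) ≤ ∫ t in Ioi T, F t :=
    calc -(B / (2 * T ^ 2)) = ∫ t in Ioi T, -B * t ^ (-3 : ℝ) := by
          rw [integral_const_mul, integral_Ioi_rpow_of_lt (by norm_num) hT]
          rw [show (-3 : ℝ) + 1 = -2 by norm_num, rpow_neg hT.le, rpow_two]
          field_simp
      _ ≤ ∫ t in Ioi T, F t :=
          setIntegral_mono_on ((integrableOn_Ioi_rpow_of_lt (by norm_num) hT).const_mul _)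
            (hF.mono_set (Ioi_subset_Ioi hT.le)) measurableSet_Ioi fun t ht => by
            have ht : 0 < t := hT.trans ht
            rw [rpow_neg ht.le, rpow_ofNat, ← div_eq_mul_inv]
            exact hB t ht
  rw [← Ioc_union_Ioi_eq_Ioi hT.le, setIntegral_union (Ioc_disjoint_Ioi le_rfl)
    measurableSet_Ioi (hF.mono_set Ioc_subset_Ioi_self) (hF.mono_set (Ioi_subset_Ioi hT.le))]
  linarith

section Subordination

variable {ι E : Type*} [Fintype ι] [DecidableEq ι] [NormedAddCommGroup E]

theorem integrable_mul_exp_neg_norm_sub_sq_mul_sq {p q : E} (hpq : p ≠ q) (a : ℝ) :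
    Integrable fun t : ℝ => a * rexp (-‖p - q‖ ^ 2 * t ^ 2) := by
  have : 0 < ‖p - q‖ ^ 2 := by have := sub_ne_zero.mpr hpq; positivity
  exact (integrable_exp_neg_mul_sq this).const_mul a

theorem integrable_gaussianInteraction {x : ι → E} (hx : Function.Injective x) (c : ι → ℝ) :
    Integrable (gaussianInteraction x c) :=
  integrable_finsetSum _ fun _ _ => integrable_finsetSum _ fun _ hj =>
    integrable_mul_exp_neg_norm_sub_sq_mul_sq (hx.ne (ne_of_mem_erase hj).symm) _

theorem sum_div_four_pi_norm_eq_integral_gaussianInteraction {x : ι → E}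
    (hx : Function.Injective x) (c : ι → ℝ) :
    ∑ i, ∑ j ∈ univ.erase i, c i * c j / (4 * π * ‖x i - x j‖) =
      (2 * π * √π)⁻¹ * ∫ t in Ioi 0, gaussianInteraction x c t := by
  have hne : ∀ i, ∀ j ∈ univ.erase i, x i ≠ x j := fun i _ hj => hx.ne (ne_of_mem_erase hj).symm
  have hint : ∀ i, ∀ j ∈ univ.erase i,
      Integrable fun t : ℝ => c i * c j * rexp (-‖x i - x j‖ ^ 2 * t ^ 2) := fun i j hj =>
    integrable_mul_exp_neg_norm_sub_sq_mul_sq (hne i j hj) _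
  simp only [gaussianInteraction]
  rw [integral_finsetSum _ fun i _ =>
    (integrable_finsetSum _ (hint i)).integrableOn, mul_sum]
  refine sum_congr rfl fun i _ => ?_
  rw [integral_finsetSum _ fun j hj => (hint i j hj).integrableOn, mul_sum]
  refine sum_congr rfl fun j hj => ?_
  have hr : 0 < ‖x i - x j‖ := norm_pos_iff.mpr (sub_ne_zero.mpr (hne i j hj))
  rw [integral_const_mul, integral_Ioi_exp_neg_sq_mul_sq hr]
  field_simp
  ring

end Subordination

theorem newtonian_interaction_lower_bound (d : ℝ) (hd : 0 < d) (N : ℕ)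
    (x : Fin N → EuclideanSpace ℝ (Fin 3))
    (hsep : ∀ i j, i ≠ j → 2 * d ≤ ‖x i - x j‖)
    (c : Fin N → ℝ) :
    -(3 / (2 * π * d)) * ∑ i, (c i) ^ 2 ≤
      ∑ i, ∑ j ∈ Finset.univ.erase i, c i * c j / (4 * π * ‖x i - x j‖) := by
  have hx : Function.Injective x := fun i j hij => by_contra fun hne => by
    have := hsep i j hne
    simp only [hij, sub_self, norm_zero] at this
    linarith
  set Q := ∑ i, c i ^ 2
  have hbound := neg_add_le_integral_Ioi (integrable_gaussianInteraction hx c).integrableOn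
    (T := 2 / d) (by positivity) (fun t _ => neg_sum_sq_le_gaussianInteraction x c t)
    (B := 81 * √π / (32 * d ^ 3) * Q) fun t ht =>
      (neg_mul_sum_sq_le_gaussianInteraction
        (fun i => sum_exp_le_of_separated_fin_three hd hsep i ht) c).trans_eq' (by ring)
  rw [sum_div_four_pi_norm_eq_integral_gaussianInteraction hx c]
  refine le_trans ?_ (mul_le_mul_of_nonneg_left hbound (by positivity))
  have hconst : (2 + 81 * √π / 256) / √π ≤ 3 := by
    have hsqrt : 1 ≤ √π := one_le_sqrt.mpr (by linarith [pi_gt_three])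
    rw [div_le_iff₀ (by positivity)]
    linarith
  have hQ : 0 ≤ Q / (2 * π * d) := by positivity
  calc -(3 / (2 * π * d)) * Q = -(Q / (2 * π * d)) * 3 := by ring
    _ ≤ -(Q / (2 * π * d)) * ((2 + 81 * √π / 256) / √π) :=
        mul_le_mul_of_nonpos_left hconst (neg_nonpos.mpr hQ)
    _ = _ := by field_simp; ring
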